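/- arXiv:1303.2715 — 7 statements merged into one kernel-verified Lean document; each statement's English description precedes it below -/
import Mathlib

section
/- Let φ : ℝⁿ → ℝ be C¹ with |∇φ(x)| ≥ b₁ > 0 for all x in an open set Ω, and let ‖∇φ‖ be uniformly continuous. Fix x₀ ∈ Ω with φ(x₀) = b, and let ν = -∇φ(x₀)/|∇φ(x₀)|. Then for every angle θ ∈ (0, π/2) there exists δ > 0 (depending only on b₁, θ, and the modulus of continuity of ∇φ) such that every x ∈ B_δ(x₀) ∩ Ω with ⟨x - x₀, ν⟩ ≥ cos(θ)·|x - x₀| satisfies φ(x) < b. -/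
/-!
Near `x₀` the function is its first-order Taylor polynomial up to an error `ε ‖x - x₀‖`, where `ε`
bounds the oscillation of `∇φ` on the ball; by uniform continuity `ε` can be made as small as we
like with a radius independent of `x₀`. Inside the cone the linear term is at most
`-cos θ ‖∇φ x₀‖ ‖x - x₀‖ ≤ -b₁ cos θ ‖x - x₀‖`, so taking `ε = b₁ cos θ / 2` makes `φ x < φ x₀`.
-/

open Metric Real
open scoped RealInnerProductSpace

section InnerProductSpace

variable {F : Type*} [NormedAddCommGroup F] [InnerProductSpace ℝ F]

lemma inner_le_of_mul_norm_le_inner_neg_normalize {g v : F} (hg : g ≠ 0) {c : ℝ}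
    (hcone : c * ‖v‖ ≤ ⟪v, -(‖g‖⁻¹) • g⟫) : ⟪g, v⟫ ≤ -(c * ‖g‖ * ‖v‖) := by
  have hg' : 0 < ‖g‖ := norm_pos_iff.mpr hg
  rw [real_inner_smul_right, real_inner_comm] at hcone
  have := mul_le_mul_of_nonneg_left hcone hg'.le
  rw [show ‖g‖ * (-‖g‖⁻¹ * ⟪g, v⟫) = -⟪g, v⟫ by field_simp] at this
  linarith

variable [CompleteSpace F]

lemma norm_fderiv_sub_fderiv_eq_dist_gradient (f : F → ℝ) (x y : F) :
    ‖fderiv ℝ f x - fderiv ℝ f y‖ = dist (gradient f x) (gradient f y) := by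
  rw [dist_eq_norm, ← (InnerProductSpace.toDual ℝ F).norm_map, map_sub, toDual_gradient,
    toDual_gradient]

lemma Convex.le_add_inner_gradient_add_mul_norm {s : Set F} (hs : Convex ℝ s) {f : F → ℝ}
    (hf : ∀ z ∈ s, DifferentiableAt ℝ f z) {x₀ x : F} (hx₀ : x₀ ∈ s) (hx : x ∈ s) {ε : ℝ}
    (hosc : ∀ z ∈ s, dist (gradient f z) (gradient f x₀) ≤ ε) :
    f x ≤ f x₀ + ⟪gradient f x₀, x - x₀⟫ + ε * ‖x - x₀‖ := by
  have hmv := hs.norm_image_sub_le_of_norm_fderiv_le' hf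
    (fun z hz => (norm_fderiv_sub_fderiv_eq_dist_gradient f z x₀).trans_le (hosc z hz)) hx₀ hx
  rw [← inner_gradient_left, Real.norm_eq_abs] at hmv
  linarith [le_abs_self (f x - f x₀ - ⟪gradient f x₀, x - x₀⟫)]

end InnerProductSpace

theorem stmt_0_general {n : ℕ} (φ : EuclideanSpace ℝ (Fin n) → ℝ)
    (Ω : Set (EuclideanSpace ℝ (Fin n)))
    (hφ : ContDiff ℝ 1 φ) (b₁ : ℝ) (hb₁ : 0 < b₁)
    (hgrad : ∀ x ∈ Ω, b₁ ≤ ‖gradient φ x‖)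
    (huc : UniformContinuous (gradient φ))
    (x₀ : EuclideanSpace ℝ (Fin n)) (hx₀ : x₀ ∈ Ω) (b : ℝ) (hb : φ x₀ = b)
    (ν : EuclideanSpace ℝ (Fin n))
    (hν : ν = -(‖gradient φ x₀‖⁻¹) • gradient φ x₀)
    (θ : ℝ) (hθ : θ ∈ Set.Ioo 0 (π / 2)) :
    ∃ δ > 0, ∀ x ∈ ball x₀ δ ∩ Ω, x ≠ x₀ →
      Real.cos θ * ‖x - x₀‖ ≤ ⟪x - x₀, ν⟫ → φ x < b := by
  have hcos : 0 < cos θ := cos_pos_of_mem_Ioo ⟨by linarith [hθ.1, pi_pos], hθ.2⟩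
  have hg : b₁ ≤ ‖gradient φ x₀‖ := hgrad x₀ hx₀
  obtain ⟨δ, hδ, hosc⟩ := Metric.uniformContinuous_iff.mp huc (b₁ * cos θ / 2) (by positivity)
  refine ⟨δ, hδ, fun x ⟨hxδ, _⟩ hne hcone => ?_⟩
  have hv : 0 < ‖x - x₀‖ := norm_pos_iff.mpr (sub_ne_zero.mpr hne)
  have htaylor := (convex_ball x₀ δ).le_add_inner_gradient_add_mul_norm
    (fun z _ => (hφ.differentiable one_ne_zero).differentiableAt) (mem_ball_self hδ) hxδ
    (fun z hz => (hosc (mem_ball.mp hz)).le)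
  have hlin := inner_le_of_mul_norm_le_inner_neg_normalize
    (norm_pos_iff.mp (hb₁.trans_le hg)) (hν ▸ hcone)
  nlinarith [mul_le_mul_of_nonneg_right hg (mul_nonneg hcos.le hv.le), mul_pos hcos hv]

/-- Lemma 2.6 (key step): interior cone condition for sublevel sets of a C¹
function with uniformly non-vanishing, uniformly continuous gradient. -/
theorem stmt_0 {n : ℕ} (φ : EuclideanSpace ℝ (Fin n) → ℝ)
    (Ω : Set (EuclideanSpace ℝ (Fin n))) (hΩ : IsOpen Ω)
    (hφ : ContDiff ℝ 1 φ) (b₁ : ℝ) (hb₁ : 0 < b₁)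
    (hgrad : ∀ x ∈ Ω, b₁ ≤ ‖gradient φ x‖)
    (huc : UniformContinuous (gradient φ))
    (x₀ : EuclideanSpace ℝ (Fin n)) (hx₀ : x₀ ∈ Ω) (b : ℝ) (hb : φ x₀ = b)
    (ν : EuclideanSpace ℝ (Fin n))
    (hν : ν = -(‖gradient φ x₀‖⁻¹) • gradient φ x₀)
    (θ : ℝ) (hθ : θ ∈ Set.Ioo 0 (π / 2)) :
    ∃ δ > 0, ∀ x ∈ ball x₀ δ ∩ Ω, x ≠ x₀ →
      Real.cos θ * ‖x - x₀‖ ≤ ⟪x - x₀, ν⟫ → φ x < b :=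
  stmt_0_general φ Ω hφ b₁ hb₁ hgrad huc x₀ hx₀ b hb ν hν θ hθ
end

section
/- Let φ : ℝⁿ → ℝ be C² with second derivatives bounded by c₂ := ‖φ‖_{C²}, and suppose |∇φ(x₀)| ≥ b₁ > 0 at a point x₀ with φ(x₀) = b. Set r := b₁/c₂ and ν := -∇φ(x₀)/|∇φ(x₀)|. Then the open ball B_r(x₀ + rν) is contained in the sublevel set {x : φ(x) < b}. -/
/-!
Taylor's formula with the bound `c₂` on the Hessian gives
`φ x ≤ b + ⟪∇φ(x₀), x - x₀⟫ + (c₂/2)‖x - x₀‖²`. A point `x` of the ball `B_r(x₀ + rν)` satisfies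
`‖x - x₀‖² < 2r ⟪x - x₀, ν⟫`, i.e. the angle between `x - x₀` and `ν` has cosine larger than
`‖x - x₀‖/(2r)`. Since `⟪∇φ(x₀), x - x₀⟫ = -‖∇φ(x₀)‖ ⟪x - x₀, ν⟫ ≤ -b₁ ⟪x - x₀, ν⟫` and
`b₁/(2r) = c₂/2`, the linear term strictly beats the quadratic one.
-/

open scoped RealInnerProductSpace

section Taylor

variable {E F : Type*} [NormedAddCommGroup E] [NormedSpace ℝ E]
  [NormedAddCommGroup F] [NormedSpace ℝ F]

theorem norm_fderiv_sub_le_of_norm_iteratedFDeriv_two_le {f : E → F} (hf : ContDiff ℝ 2 f)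
    {C : ℝ} (hC : ∀ x, ‖iteratedFDeriv ℝ 2 f x‖ ≤ C) (a b : E) :
    ‖fderiv ℝ f a - fderiv ℝ f b‖ ≤ C * ‖a - b‖ := by
  have hf' : ContDiff ℝ 1 (fderiv ℝ f) := hf.fderiv_right le_rfl
  refine convex_univ.norm_image_sub_le_of_norm_fderiv_le
    (fun y _ => hf'.differentiable one_ne_zero y) (fun y _ => ?_) trivial trivial
  calc ‖fderiv ℝ (fderiv ℝ f) y‖
      = ‖iteratedFDeriv ℝ 1 (fderiv ℝ f) y‖ := by
        rw [← norm_iteratedFDeriv_fderiv, norm_iteratedFDeriv_zero]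
    _ = ‖iteratedFDeriv ℝ 2 f y‖ := norm_iteratedFDeriv_fderiv
    _ ≤ C := hC y

theorem le_add_fderiv_add_of_norm_fderiv_sub_le {f : E → ℝ} (hf : Differentiable ℝ f) {C : ℝ}
    (hC : ∀ a b, ‖fderiv ℝ f a - fderiv ℝ f b‖ ≤ C * ‖a - b‖) (x y : E) :
    f y ≤ f x + fderiv ℝ f x (y - x) + C / 2 * ‖y - x‖ ^ 2 := by
  set v := y - x
  set L := fderiv ℝ f x
  let h : ℝ → ℝ := fun t => f (x + t • v) - t * L v - C / 2 * ‖v‖ ^ 2 * t ^ 2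
  have h_deriv (t : ℝ) :
      HasDerivAt h (fderiv ℝ f (x + t • v) v - L v - C * ‖v‖ ^ 2 * t) t := by
    have hline : HasDerivAt (fun s : ℝ => x + s • v) v t := by
      simpa using ((hasDerivAt_id t).smul_const v).const_add x
    refine ((((hf _).hasFDerivAt.comp_hasDerivAt t hline).sub
      ((hasDerivAt_id t).mul_const (L v))).sub
      ((hasDerivAt_pow 2 t).const_mul (C / 2 * ‖v‖ ^ 2))).congr_deriv ?_
    ring
  have h_antitone : AntitoneOn h (Set.Ici 0) := by
    refine antitoneOn_of_deriv_nonpos (convex_Ici 0)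
      (fun t _ => (h_deriv t).continuousAt.continuousWithinAt)
      (fun t _ => (h_deriv t).differentiableAt.differentiableWithinAt) fun t ht => ?_
    rw [interior_Ici, Set.mem_Ioi] at ht
    rw [(h_deriv t).deriv, ← sub_apply]
    have hstep : ‖fderiv ℝ f (x + t • v) - L‖ ≤ C * (t * ‖v‖) := by
      simpa [norm_smul, abs_of_pos ht] using hC (x + t • v) x
    linarith [Real.le_norm_self ((fderiv ℝ f (x + t • v) - L) v),
      (fderiv ℝ f (x + t • v) - L).le_opNorm v, mul_le_mul_of_nonneg_right hstep (norm_nonneg v)]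
  have h0 : h 0 = f x := by simp [h]
  have h1 : h 1 = f y - L v - C / 2 * ‖v‖ ^ 2 := by simp [h, v]
  linarith [h_antitone (Set.mem_Ici.2 le_rfl) (Set.mem_Ici.2 zero_le_one) zero_le_one]

end Taylor

theorem fderiv_apply_eq_inner_gradient {F : Type*} [NormedAddCommGroup F]
    [InnerProductSpace ℝ F] [CompleteSpace F] (f : F → ℝ) (x v : F) :
    fderiv ℝ f x v = ⟪gradient f x, v⟫ := by
  rw [← toDual_gradient, InnerProductSpace.toDual_apply_apply]

theorem norm_sq_lt_inner_of_mem_ball {F : Type*} [NormedAddCommGroup F] [InnerProductSpace ℝ F]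
    {x₀ x ν : F} (hν : ‖ν‖ = 1) {r : ℝ} (hr : 0 < r) (hx : x ∈ Metric.ball (x₀ + r • ν) r) :
    ‖x - x₀‖ ^ 2 < 2 * r * ⟪x - x₀, ν⟫ := by
  rw [Metric.mem_ball, dist_eq_norm, sub_add_eq_sub_sub] at hx
  have hsq : ‖x - x₀ - r • ν‖ ^ 2 = ‖x - x₀‖ ^ 2 - 2 * r * ⟪x - x₀, ν⟫ + r ^ 2 := by
    rw [norm_sub_sq_real, real_inner_smul_right, norm_smul, hν, Real.norm_of_nonneg hr.le]
    ring
  nlinarith [norm_nonneg (x - x₀ - r • ν)]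

/-- Lemma 2.9 (computation): uniform interior ball condition for sublevel sets
of a C² function with bounded second derivatives and non-degenerate gradient. -/
theorem stmt_2 {n : ℕ} (φ : EuclideanSpace ℝ (Fin n) → ℝ)
    (hφ : ContDiff ℝ 2 φ) (c₂ b₁ b : ℝ) (hc₂ : 0 < c₂)
    (hbound : ∀ x, ‖iteratedFDeriv ℝ 2 φ x‖ ≤ c₂)
    (x₀ : EuclideanSpace ℝ (Fin n)) (hb : φ x₀ = b)
    (hb₁ : 0 < b₁) (hgrad : b₁ ≤ ‖gradient φ x₀‖)
    (r : ℝ) (hr : r = b₁ / c₂)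
    (ν : EuclideanSpace ℝ (Fin n))
    (hν : ν = -(‖gradient φ x₀‖⁻¹) • gradient φ x₀) :
    Metric.ball (x₀ + r • ν) r ⊆ {x | φ x < b} := by
  intro x hx
  set g := gradient φ x₀
  have hg : 0 < ‖g‖ := hb₁.trans_le hgrad
  have hr₀ : 0 < r := hr ▸ div_pos hb₁ hc₂
  have hν_norm : ‖ν‖ = 1 := by
    rw [hν, norm_smul, norm_neg, norm_inv, norm_norm, inv_mul_cancel₀ hg.ne']
  have h_taylor := le_add_fderiv_add_of_norm_fderiv_sub_le (hφ.differentiable two_ne_zero)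
    (norm_fderiv_sub_le_of_norm_iteratedFDeriv_two_le hφ hbound) x₀ x
  rw [fderiv_apply_eq_inner_gradient, hb] at h_taylor
  have h_inner : ⟪g, x - x₀⟫ = -‖g‖ * ⟪x - x₀, ν⟫ := by
    rw [hν, real_inner_smul_right, real_inner_comm]
    field_simp
  have h_ball := norm_sq_lt_inner_of_mem_ball hν_norm hr₀ hx
  have h_cone : 0 < ⟪x - x₀, ν⟫ := by nlinarith [sq_nonneg ‖x - x₀‖]
  have hb₁r : b₁ = c₂ * r := by rw [hr]; field_simp
  show φ x < b
  nlinarith [mul_le_mul_of_nonneg_right hgrad h_cone.le]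
end

section
/- Let f : ℝ^{n-1} → ℝ be such that locally f equals the infimum over a family of functions of the form z' ↦ h_y + √(r² - |z' - y'|²) restricted to |z' - y'| < r (spherical caps of fixed radius r > 0, with the cap opening downward toward its center above), where the family is such that f is real-valued and locally each point of the graph of f touches one cap from inside. If additionally f is Lipschitz with constant L on a ball B, then f is semiconcave on a smaller ball: there exists C = C(r, L) such that z' ↦ f(z') - (C/2)|z'|² is concave near each point. -/
set_option maxHeartbeats 1000000

lemma cap_concave {E : Type*} [NormedAddCommGroup E] [NormedSpace ℝ E]
    (r : ℝ) (u v : E) (hu : ‖u‖ ≤ r) (hv : ‖v‖ ≤ r)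
    {a b : ℝ} (ha : 0 ≤ a) (hb : 0 ≤ b) (hab : a + b = 1) :
    a * Real.sqrt (r ^ 2 - ‖u‖ ^ 2) + b * Real.sqrt (r ^ 2 - ‖v‖ ^ 2) ≤
      Real.sqrt (r ^ 2 - ‖a • u + b • v‖ ^ 2) := by
  have hp : (0:ℝ) ≤ ‖u‖ := norm_nonneg u
  have hq : (0:ℝ) ≤ ‖v‖ := norm_nonneg v
  set p := ‖u‖
  set q := ‖v‖
  set α := Real.sqrt (r ^ 2 - p ^ 2) with hαdef
  set β := Real.sqrt (r ^ 2 - q ^ 2) with hβdef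
  have hα0 : 0 ≤ α := Real.sqrt_nonneg _
  have hβ0 : 0 ≤ β := Real.sqrt_nonneg _
  have hα : α ^ 2 = r ^ 2 - p ^ 2 := Real.sq_sqrt (by nlinarith)
  have hβ : β ^ 2 = r ^ 2 - q ^ 2 := Real.sq_sqrt (by nlinarith)
  have hn0 : (0:ℝ) ≤ ‖a • u + b • v‖ := norm_nonneg _
  have hn : ‖a • u + b • v‖ ≤ a * p + b * q := by
    refine (norm_add_le _ _).trans ?_
    rw [norm_smul, norm_smul, Real.norm_eq_abs, Real.norm_eq_abs,
      abs_of_nonneg ha, abs_of_nonneg hb]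
  have hCS : p * q + α * β ≤ r ^ 2 := by
    nlinarith [sq_nonneg (p * β - q * α), mul_nonneg hp hq, mul_nonneg hα0 hβ0,
      sq_nonneg (p * q + α * β - r ^ 2)]
  have hab2 : (a + b) ^ 2 = 1 := by rw [hab]; ring
  have e : (a * α + b * β) ^ 2 + (a * p + b * q) ^ 2
      = r ^ 2 - 2 * a * b * (r ^ 2 - (p * q + α * β)) := by
    linear_combination a ^ 2 * hα + b ^ 2 * hβ + r ^ 2 * hab2
  have h2 : (a * α + b * β) ^ 2 + (a * p + b * q) ^ 2 ≤ r ^ 2 := by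
    rw [e]
    nlinarith [mul_nonneg (mul_nonneg ha hb) (by linarith : (0:ℝ) ≤ r ^ 2 - (p * q + α * β))]
  have h1 : ‖a • u + b • v‖ ^ 2 ≤ (a * p + b * q) ^ 2 := pow_le_pow_left₀ hn0 hn 2
  have hgoal2 : (a * α + b * β) ^ 2 ≤ r ^ 2 - ‖a • u + b • v‖ ^ 2 := by linarith
  calc a * α + b * β ≤ Real.sqrt ((a * α + b * β) ^ 2) := by
        rw [Real.sqrt_sq (by positivity)]
    _ ≤ Real.sqrt (r ^ 2 - ‖a • u + b • v‖ ^ 2) := Real.sqrt_le_sqrt hgoal2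

private lemma capA (r L t s : ℝ) (hL : 0 ≤ L) (ht0 : 0 < t) (hs0 : 0 < s)
    (htr : t < r) (hsr : t + s < r)
    (hdiff : Real.sqrt (r ^ 2 - t ^ 2) - Real.sqrt (r ^ 2 - (t + s) ^ 2) ≤ L * s) :
    t ≤ L * r / Real.sqrt (1 + L ^ 2) := by
  have hr : 0 < r := ht0.trans htr
  have hsq : (0:ℝ) < Real.sqrt (1 + L ^ 2) := Real.sqrt_pos.mpr (by positivity)
  set A : ℝ := Real.sqrt (r ^ 2 - t ^ 2) with hAdef
  set B : ℝ := Real.sqrt (r ^ 2 - (t + s) ^ 2) with hBdef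
  have hA2 : A ^ 2 = r ^ 2 - t ^ 2 := Real.sq_sqrt (by nlinarith)
  have hB2 : B ^ 2 = r ^ 2 - (t + s) ^ 2 := Real.sq_sqrt (by nlinarith)
  have hApos : 0 < A := Real.sqrt_pos.mpr (by nlinarith)
  have hB0 : 0 ≤ B := Real.sqrt_nonneg _
  have hBA : B ≤ A := Real.sqrt_le_sqrt (by nlinarith)
  have hkey : t ≤ L * A := by
    have hprod : (A - B) * (A + B) ≤ L * s * (A + B) :=
      mul_le_mul_of_nonneg_right hdiff (by linarith)
    have hexp : (A - B) * (A + B) = 2 * t * s + s ^ 2 := by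
      have e : (A - B) * (A + B) = A ^ 2 - B ^ 2 := by ring
      rw [e, hA2, hB2]; ring
    nlinarith [mul_nonneg (mul_nonneg hL hs0.le) (sub_nonneg.mpr hBA)]
  have ht2 : t ^ 2 * (1 + L ^ 2) ≤ L ^ 2 * r ^ 2 := by
    nlinarith [mul_self_le_mul_self ht0.le hkey]
  rw [le_div_iff₀ hsq]
  have hsq2 : (t * Real.sqrt (1 + L ^ 2)) ^ 2 ≤ (L * r) ^ 2 := by
    rw [mul_pow, Real.sq_sqrt (by positivity : (0:ℝ) ≤ 1 + L ^ 2)]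
    nlinarith
  nlinarith [mul_nonneg ht0.le hsq.le, mul_nonneg hL hr.le]

private lemma sq_combo {a b : ℝ} (ha : 0 ≤ a) (hb : 0 ≤ b) (hab : a + b = 1)
    (Nz Nx Nw : ℝ) (k0 : 0 ≤ Nz) (k3 : Nz ≤ a * Nx + b * Nw) :
    Nz ^ 2 ≤ a * Nx ^ 2 + b * Nw ^ 2 := by
  nlinarith [mul_self_le_mul_self k0 k3, mul_nonneg ha hb, sq_nonneg (Nx - Nw)]

private lemma final_combo {a b : ℝ} (Fx Fw Fz Nx Nw Nz : ℝ)
    (k1 : a * Fx + b * Fw ≤ Fz) (k2 : Nz ≤ a * Nx + b * Nw) :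
    a * (Fx - 1 / 2 * Nx) + b * (Fw - 1 / 2 * Nw) ≤ Fz - 1 / 2 * Nz := by
  nlinarith [k1, k2]


/-- Mechanism behind Corollary 3.3: a Lipschitz function each point of whose
graph is touched from above by a spherical cap of fixed radius r is locally
semiconcave, with semiconcavity constant depending only on r and the
Lipschitz constant. -/
theorem stmt_8 {m : ℕ} (f : EuclideanSpace ℝ (Fin m) → ℝ)
    (r L ρ : ℝ) (hr : 0 < r) (hL : 0 ≤ L) (hρ : 0 < ρ)
    (x₀ : EuclideanSpace ℝ (Fin m))
    (hlip : LipschitzOnWith (Real.toNNReal L) f (Metric.ball x₀ ρ))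
    (hcap : ∀ z' ∈ Metric.ball x₀ ρ, ∃ y' : EuclideanSpace ℝ (Fin m), ∃ h : ℝ,
      ‖z' - y'‖ < r ∧
      f z' = h + Real.sqrt (r ^ 2 - ‖z' - y'‖ ^ 2) ∧
      ∀ w' ∈ Metric.ball x₀ ρ, ‖w' - y'‖ < r →
        f w' ≤ h + Real.sqrt (r ^ 2 - ‖w' - y'‖ ^ 2)) :
    ∃ C > 0, ∃ ρ' > 0, ConcaveOn ℝ (Metric.ball x₀ ρ')
      (fun z' => f z' - C / 2 * ‖z'‖ ^ 2) := by
  have hsq : (0:ℝ) < Real.sqrt (1 + L ^ 2) := Real.sqrt_pos.mpr (by positivity)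
  set δ : ℝ := L * r / Real.sqrt (1 + L ^ 2) with hδdef
  have hδ0 : 0 ≤ δ := by positivity
  have hδr : δ < r := by
    rw [hδdef, div_lt_iff₀ hsq]
    have hL2 : L < Real.sqrt (1 + L ^ 2) :=
      (Real.lt_sqrt hL).mpr (by linarith)
    have := mul_lt_mul_of_pos_right hL2 hr
    linarith
  set ρ' : ℝ := min (ρ / 4) ((r - δ) / 4) with hρ'def
  have hρ'pos : 0 < ρ' := lt_min (by linarith) (by linarith)
  have hρ'ρ : ρ' ≤ ρ / 4 := min_le_left _ _
  have hρ'r : ρ' ≤ (r - δ) / 4 := min_le_right _ _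
  have hsub : Metric.ball x₀ ρ' ⊆ Metric.ball x₀ ρ :=
    Metric.ball_subset_ball (by linarith)
  -- Step A: any touching cap at a point of the small ball has center nearly above it
  have stepA : ∀ z ∈ Metric.ball x₀ ρ', ∀ y : EuclideanSpace ℝ (Fin m), ∀ h : ℝ,
      ‖z - y‖ < r →
      f z = h + Real.sqrt (r ^ 2 - ‖z - y‖ ^ 2) →
      (∀ w' ∈ Metric.ball x₀ ρ, ‖w' - y‖ < r →
        f w' ≤ h + Real.sqrt (r ^ 2 - ‖w' - y‖ ^ 2)) →
      ‖z - y‖ ≤ δ := by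
    intro z hz y h hty hfz hdom
    have ht0 : (0:ℝ) ≤ ‖z - y‖ := norm_nonneg _
    set t : ℝ := ‖z - y‖ with htdef
    rcases eq_or_lt_of_le ht0 with h0 | h0
    · rw [← h0]; exact hδ0
    · have hzx₀ : ‖z - x₀‖ < ρ' := by rwa [← mem_ball_iff_norm]
      set s : ℝ := min (ρ / 4) ((r - t) / 2) with hsdef
      have hs0 : 0 < s := lt_min (by linarith) (by linarith)
      have hsρ : s ≤ ρ / 4 := min_le_left _ _
      have hsr : t + s < r := by
        have := min_le_right (ρ / 4) ((r - t) / 2); linarith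
      set w : EuclideanSpace ℝ (Fin m) := z + (s / t) • (z - y) with hwdef
      have hwy : w - y = (1 + s / t) • (z - y) := by rw [hwdef]; module
      have hnwy : ‖w - y‖ = t + s := by
        rw [hwy, norm_smul, Real.norm_eq_abs, abs_of_pos (by positivity), ← htdef]
        field_simp
      have hwz : ‖w - z‖ = s := by
        have e : w - z = (s / t) • (z - y) := by rw [hwdef]; abel
        rw [e, norm_smul, Real.norm_eq_abs, abs_of_pos (by positivity), ← htdef]
        field_simp
      have hwball : w ∈ Metric.ball x₀ ρ := by
        rw [mem_ball_iff_norm]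
        have tri : ‖w - x₀‖ ≤ ‖w - z‖ + ‖z - x₀‖ := by
          have := norm_add_le (w - z) (z - x₀)
          rwa [sub_add_sub_cancel] at this
        rw [hwz] at tri
        linarith
      have hfw := hdom w hwball (by rw [hnwy]; exact hsr)
      rw [hnwy] at hfw
      have hzball : z ∈ Metric.ball x₀ ρ := hsub hz
      have hlip' : dist (f z) (f w) ≤ L * dist z w := by
        have := hlip.dist_le_mul z hzball w hwball
        rwa [Real.coe_toNNReal L hL] at this
      have hdzw : dist z w = s := by
        rw [dist_eq_norm, ← norm_neg, neg_sub, hwz]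
      rw [hdzw] at hlip'
      have hfzfw : f z - f w ≤ L * s := by
        have := le_abs_self (f z - f w)
        rw [← Real.dist_eq] at this
        linarith
      have hdiff : Real.sqrt (r ^ 2 - t ^ 2) - Real.sqrt (r ^ 2 - (t + s) ^ 2)
          ≤ L * s := by
        rw [hfz] at hfzfw
        linarith
      rw [hδdef]
      exact capA r L t s hL h0 hs0 hty hsr hdiff
  refine ⟨1, one_pos, ρ', hρ'pos, (convex_ball x₀ ρ'), ?_⟩
  intro x hx w hw a b ha hb hab
  set z : EuclideanSpace ℝ (Fin m) := a • x + b • w with hzdef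
  have hz : z ∈ Metric.ball x₀ ρ' := (convex_ball x₀ ρ') hx hw ha hb hab
  obtain ⟨y, h, hty, hfz, hdom⟩ := hcap z (hsub hz)
  have hA := stepA z hz y h hty hfz hdom
  have hzx₀ : ‖z - x₀‖ < ρ' := by rwa [← mem_ball_iff_norm]
  have hxx₀ : ‖x - x₀‖ < ρ' := by rwa [← mem_ball_iff_norm]
  have hwx₀ : ‖w - x₀‖ < ρ' := by rwa [← mem_ball_iff_norm]
  have hbd : ∀ v : EuclideanSpace ℝ (Fin m), ‖v - x₀‖ < ρ' → ‖v - y‖ < r := by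
    intro v hv
    have t1 : ‖v - z‖ ≤ ‖v - x₀‖ + ‖z - x₀‖ := by
      have := norm_sub_le (v - x₀) (z - x₀)
      rwa [sub_sub_sub_cancel_right] at this
    have t2 : ‖v - y‖ ≤ ‖v - z‖ + ‖z - y‖ := by
      have := norm_add_le (v - z) (z - y)
      rwa [sub_add_sub_cancel] at this
    have : (r - δ) / 4 ≥ ρ' := hρ'r
    linarith
  have hxy : ‖x - y‖ < r := hbd x hxx₀
  have hwy : ‖w - y‖ < r := hbd w hwx₀
  have hfx : f x ≤ h + Real.sqrt (r ^ 2 - ‖x - y‖ ^ 2) := hdom x (hsub hx) hxy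
  have hfw : f w ≤ h + Real.sqrt (r ^ 2 - ‖w - y‖ ^ 2) := hdom w (hsub hw) hwy
  have hcomb : a • (x - y) + b • (w - y) = z - y := by
    rw [hzdef]
    have hb' : b = 1 - a := by linarith
    rw [hb']; module
  have hcap' := cap_concave r (x - y) (w - y) hxy.le hwy.le ha hb hab
  rw [hcomb] at hcap'
  have h1 : a * f x + b * f w ≤ f z := by
    rw [hfz]
    have h3 := add_le_add (mul_le_mul_of_nonneg_left hfx ha)
      (mul_le_mul_of_nonneg_left hfw hb)
    have h4 : a * (h + Real.sqrt (r ^ 2 - ‖x - y‖ ^ 2))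
        + b * (h + Real.sqrt (r ^ 2 - ‖w - y‖ ^ 2))
        = h + (a * Real.sqrt (r ^ 2 - ‖x - y‖ ^ 2)
            + b * Real.sqrt (r ^ 2 - ‖w - y‖ ^ 2)) := by
      linear_combination h * hab
    linarith [hcap', h3, h4]
  have hznorm : ‖z‖ ≤ a * ‖x‖ + b * ‖w‖ := by
    rw [hzdef]
    refine (norm_add_le _ _).trans ?_
    rw [norm_smul, norm_smul, Real.norm_eq_abs, Real.norm_eq_abs,
      abs_of_nonneg ha, abs_of_nonneg hb]
  have h2 : ‖z‖ ^ 2 ≤ a * ‖x‖ ^ 2 + b * ‖w‖ ^ 2 := by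
    exact sq_combo ha hb hab _ _ _ (norm_nonneg z) hznorm
  simp only [smul_eq_mul]
  exact final_combo _ _ _ _ _ _ h1 h2
end

section
/- Let E ⊂ ℝⁿ and suppose that for each x ∈ E there exist δ_x > 0, α_x > 0, and ν_x ∈ 𝕊^{n-1} such that (x + C_{α_x}(ν_x^⊥)) ∩ B_{δ_x}(x) ∩ E = ∅ (a one-sided cone condition). Then E is (n-1)-rectifiable, i.e., E can be covered by countably many Lipschitz graphs over (n-1)-dimensional hyperplanes, up to an H^{n-1}-null set. -/
open scoped RealInnerProductSpace MeasureTheory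

/-!
Sort the points `x ∈ A` into countably many pieces indexed by `(ν, j, c)`: the cone at `x` has
radius at least `1 / j`, aperture at most `j` and an axis within `1 / (12 j)` of `ν`, taken from a
countable dense set of directions, and `x` lies within `1 / (2 j)` of `c`, taken from a countable
dense set of centres. Two points `x, y` of one piece lie in each other's cone radius, so `y - x`
avoids the cone at `x` and `x - y` the cone at `y`; as both axes are close to `ν`, this forces
`|⟪y - x, ν⟫| ≤ 2 j ‖(y - x) - ⟪y - x, ν⟫ ν‖`. Hence each piece is the graph over `ν^⊥` of a
`2 j`-Lipschitz function, which extends to the whole space by McShane's construction, and the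
pieces cover all of `A`: no exceptional null set is needed.
-/

section Cone

variable {E : Type*} [NormedAddCommGroup E] [InnerProductSpace ℝ E]

theorem inner_le_two_mul_of_near_axis {j : ℝ} (hj : 1 ≤ j) {ν ν' u : E} (hν : ‖ν‖ = 1)
    (hν' : ‖ν'‖ = 1) (hclose : ‖ν' - ν‖ ≤ 1 / (12 * j))
    (hu : ⟪u, ν'⟫ ≤ j * ‖u - ⟪u, ν'⟫ • ν'‖) :
    ⟪u, ν⟫ ≤ 2 * j * ‖u - ⟪u, ν⟫ • ν‖ := by
  set s := ⟪u, ν⟫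
  set s' := ⟪u, ν'⟫
  set p := ‖u - s • ν‖
  set ε := 1 / (12 * j)
  have hs' : |s - s'| ≤ ‖u‖ * ε := calc
    |s - s'| = |⟪u, ν - ν'⟫| := by rw [inner_sub_right]
    _ ≤ ‖u‖ * ‖ν - ν'‖ := abs_real_inner_le_norm _ _
    _ ≤ ‖u‖ * ε := by rw [norm_sub_rev]; gcongr
  have hs'u : |s'| ≤ ‖u‖ := (abs_real_inner_le_norm u ν').trans_eq (by rw [hν', mul_one])
  have hperp : ‖u - s' • ν'‖ ≤ p + 2 * (‖u‖ * ε) := calc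
    ‖u - s' • ν'‖ = ‖(u - s • ν) + ((s - s') • ν + s' • (ν - ν'))‖ := by congr 1; module
    _ ≤ p + (|s - s'| + |s'| * ‖ν' - ν‖) := by
      grw [norm_add_le, norm_add_le, norm_smul, norm_smul, hν, norm_sub_rev ν, Real.norm_eq_abs,
        Real.norm_eq_abs, mul_one]
    _ ≤ p + 2 * (‖u‖ * ε) := by grw [hs', hs'u, hclose]; linarith
  have hu_le : ‖u‖ ≤ p + |s| := calc
    ‖u‖ = ‖(u - s • ν) + s • ν‖ := by rw [sub_add_cancel]
    _ ≤ p + ‖s • ν‖ := norm_add_le _ _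
    _ = p + |s| := by rw [norm_smul, hν, mul_one, Real.norm_eq_abs]
  -- The choice `ε = 1 / (12 j)` is what keeps the final aperture below `2 j`.
  have hjε : (2 * j + 1) * ε ≤ 1 / 4 := by
    rw [mul_one_div, div_le_div_iff₀ (by positivity) (by norm_num)]
    linarith
  have hp : 0 ≤ p := norm_nonneg _
  rcases le_or_gt s 0 with hs | hs
  · nlinarith
  rw [abs_of_pos hs] at hu_le
  have : s ≤ j * p + (p + s) / 4 := calc
    s ≤ s' + ‖u‖ * ε := by linarith [(abs_le.1 hs').2]
    _ ≤ j * (p + 2 * (‖u‖ * ε)) + ‖u‖ * ε := by grw [hu, hperp]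
    _ = j * p + ((2 * j + 1) * ε) * ‖u‖ := by ring
    _ ≤ j * p + (p + s) / 4 := by grw [hjε, hu_le]; linarith
  nlinarith

theorem abs_inner_le_two_mul_of_near_axes {j : ℝ} (hj : 1 ≤ j) {ν ν₁ ν₂ u : E} (hν : ‖ν‖ = 1)
    (hν₁ : ‖ν₁‖ = 1) (hν₂ : ‖ν₂‖ = 1)
    (hclose₁ : ‖ν₁ - ν‖ ≤ 1 / (12 * j)) (hclose₂ : ‖ν₂ - ν‖ ≤ 1 / (12 * j))
    (hu : ⟪u, ν₁⟫ ≤ j * ‖u - ⟪u, ν₁⟫ • ν₁‖) (hu_neg : ⟪-u, ν₂⟫ ≤ j * ‖-u - ⟪-u, ν₂⟫ • ν₂‖) :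
    |⟪u, ν⟫| ≤ 2 * j * ‖u - ⟪u, ν⟫ • ν‖ := by
  have h_neg := inner_le_two_mul_of_near_axis hj hν hν₂ hclose₂ hu_neg
  rw [inner_neg_left, neg_smul, ← neg_add', norm_neg, ← sub_eq_add_neg] at h_neg
  exact abs_le.2 ⟨by linarith, inner_le_two_mul_of_near_axis hj hν hν₁ hclose₁ hu⟩

theorem exists_lipschitzWith_graph_of_abs_inner_le {S : Set E} {ν : E} {K : NNReal}
    (hS : ∀ x ∈ S, ∀ y ∈ S, |⟪y - x, ν⟫| ≤ K * ‖(y - x) - ⟪y - x, ν⟫ • ν‖) :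
    ∃ g : E → ℝ, LipschitzWith K g ∧ ∀ x ∈ S, ⟪x, ν⟫ = g (x - ⟪x, ν⟫ • ν) := by
  set P : E → E := fun x => x - ⟪x, ν⟫ • ν
  have hP : ∀ x y, P y - P x = (y - x) - ⟪y - x, ν⟫ • ν := fun x y => by
    simp only [P, inner_sub_left]; module
  have hinj : Set.InjOn P S := by
    intro x hx y hy hxy
    have h := hS x hx y hy
    rw [← hP, hxy, sub_self, norm_zero, mul_zero, abs_nonpos_iff] at h
    have : P y - P x = y - x := by rw [hP, h, zero_smul, sub_zero]
    rw [hxy, sub_self] at this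
    exact (sub_eq_zero.1 this.symm).symm
  set f : E → ℝ := fun w => ⟪Function.invFunOn P S w, ν⟫
  have hf : ∀ x ∈ S, f (P x) = ⟪x, ν⟫ := fun x hx => by
    simp only [f, hinj.leftInvOn_invFunOn hx]
  have hLip : LipschitzOnWith K f (P '' S) := by
    rw [lipschitzOnWith_iff_dist_le_mul]
    rintro _ ⟨x, hx, rfl⟩ _ ⟨y, hy, rfl⟩
    rw [hf x hx, hf y hy, Real.dist_eq, dist_eq_norm, hP, ← inner_sub_left]
    exact hS y hy x hx
  obtain ⟨g, hg, hfg⟩ := hLip.extend_real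
  exact ⟨g, hg, fun x hx => by rw [← hfg (Set.mem_image_of_mem P hx), hf x hx]⟩

/-- The set `A_{ij}` of the paper, localized to a ball of radius `1 / (2j)` so that any two of
its points lie within the cone radius `1 / j` of each other. -/
def conePiece (A : Set E) (ν : E) (j : ℕ) (c : E) : Set E :=
  {x | x ∈ A ∧ x ∈ Metric.ball c (1 / (2 * j)) ∧
    ∃ w : E, ‖w‖ = 1 ∧ ‖w - ν‖ ≤ 1 / (12 * j) ∧
      ∀ z ∈ Metric.ball x (1 / j), j * ‖(z - x) - ⟪z - x, w⟫ • w‖ < ⟪z - x, w⟫ → z ∉ A}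

theorem abs_inner_sub_le_of_mem_conePiece {A : Set E} {ν c x y : E} (hν : ‖ν‖ = 1) {j : ℕ}
    (hj : 1 ≤ j) (hx : x ∈ conePiece A ν j c) (hy : y ∈ conePiece A ν j c) :
    |⟪y - x, ν⟫| ≤ 2 * j * ‖(y - x) - ⟪y - x, ν⟫ • ν‖ := by
  obtain ⟨hxA, hxc, wx, hwx, hwxν, hconex⟩ := hx
  obtain ⟨hyA, hyc, wy, hwy, hwyν, hconey⟩ := hy
  have hdist : dist y x < 1 / j := calc
    dist y x ≤ dist y c + dist x c := dist_triangle_right _ _ _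
    _ < 1 / (2 * j) + 1 / (2 * j) := add_lt_add hyc hxc
    _ = 1 / j := by field_simp; norm_num
  refine abs_inner_le_two_mul_of_near_axes (by exact_mod_cast hj) hν hwx hwy hwxν hwyν
    (not_lt.1 fun h => hconex y hdist h hyA) (not_lt.1 fun h => ?_)
  rw [neg_sub] at h
  exact hconey x (by rwa [Metric.mem_ball, dist_comm]) h hxA

theorem mem_conePiece {A : Set E} {x : E} (hx : x ∈ A) {δ α : ℝ} {w : E} (hw : ‖w‖ = 1)
    (hcone : ∀ z ∈ Metric.ball x δ, α * ‖(z - x) - ⟪z - x, w⟫ • w‖ < ⟪z - x, w⟫ → z ∉ A)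
    {j : ℕ} (hjδ : 1 / j ≤ δ) (hjα : α ≤ j) {ν c : E} (hwν : ‖w - ν‖ ≤ 1 / (12 * j))
    (hc : dist x c < 1 / (2 * j)) :
    x ∈ conePiece A ν j c := by
  refine ⟨hx, hc, w, hw, hwν, fun z hz hlt => hcone z (Metric.ball_subset_ball hjδ hz) ?_⟩
  grw [hjα]
  exact hlt

theorem subset_iUnion_conePiece {A : Set E}
    (hcone : ∀ x ∈ A, ∃ δ > (0 : ℝ), ∃ α > (0 : ℝ), ∃ ν : E, ‖ν‖ = 1 ∧
        ∀ z ∈ Metric.ball x δ, α * ‖(z - x) - ⟪z - x, ν⟫ • ν‖ < ⟪z - x, ν⟫ → z ∉ A)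
    {d : ℕ → Metric.sphere (0 : E) 1} (hd : DenseRange d) {q : ℕ → E} (hq : DenseRange q) :
    A ⊆ ⋃ (i : ℕ) (j : ℕ) (m : ℕ), conePiece A (d i) (j + 1) (q m) := by
  intro x hx
  obtain ⟨δ, hδ, α, -, w, hw, hconex⟩ := hcone x hx
  obtain ⟨j, hj⟩ := exists_nat_gt (max α (1 / δ))
  have hj₁ : (0 : ℝ) < ↑(j + 1) := by positivity
  obtain ⟨i, hi⟩ := Metric.denseRange_iff.1 hd ⟨w, mem_sphere_zero_iff_norm.2 hw⟩
    (1 / (12 * ↑(j + 1))) (by positivity)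
  obtain ⟨m, hm⟩ := Metric.denseRange_iff.1 hq x (1 / (2 * ↑(j + 1))) (by positivity)
  simp only [Set.mem_iUnion]
  refine ⟨i, j, m, mem_conePiece hx hw hconex ?_ ?_ ?_ hm⟩
  · rw [div_le_iff₀ hj₁, ← div_le_iff₀' hδ]
    push_cast
    linarith [le_max_right α (1 / δ)]
  · push_cast
    linarith [le_max_left α (1 / δ)]
  · rw [← dist_eq_norm]
    exact hi.le

end Cone

/-- Proposition 3.7 (abstract form): a set satisfying a pointwise one-sided
open cone condition is (n-1)-rectifiable: it is covered, up to an
H^{n-1}-null set, by countably many Lipschitz graphs over hyperplanes. -/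
theorem stmt_10 {n : ℕ} (hn : 0 < n) (A : Set (EuclideanSpace ℝ (Fin n)))
    (hcone : ∀ x ∈ A, ∃ δ > (0 : ℝ), ∃ α > (0 : ℝ),
      ∃ ν : EuclideanSpace ℝ (Fin n), ‖ν‖ = 1 ∧
        ∀ z ∈ Metric.ball x δ,
          α * ‖(z - x) - ⟪z - x, ν⟫ • ν‖ < ⟪z - x, ν⟫ → z ∉ A) :
    ∃ (ν : ℕ → EuclideanSpace ℝ (Fin n)) (L : ℕ → NNReal)
      (φ : ℕ → EuclideanSpace ℝ (Fin n) → ℝ) (N : Set (EuclideanSpace ℝ (Fin n))),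
      μH[(n : ℝ) - 1] N = 0 ∧
      (∀ k, ‖ν k‖ = 1 ∧ LipschitzWith (L k) (φ k)) ∧
      A ⊆ N ∪ ⋃ k, {z | ⟪z, ν k⟫ = φ k (z - ⟪z, ν k⟫ • ν k)} := by
  have : Nonempty (Metric.sphere (0 : EuclideanSpace ℝ (Fin n)) 1) :=
    ⟨⟨EuclideanSpace.single ⟨0, hn⟩ 1, by simp⟩⟩
  obtain ⟨d, hd⟩ := TopologicalSpace.exists_dense_seq (Metric.sphere (0 : EuclideanSpace ℝ (Fin n)) 1)
  obtain ⟨q, hq⟩ := TopologicalSpace.exists_dense_seq (EuclideanSpace ℝ (Fin n))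
  let e : ℕ ≃ ℕ × ℕ × ℕ := (Denumerable.eqv _).symm
  have hunit (i : ℕ) : ‖(d i : EuclideanSpace ℝ (Fin n))‖ = 1 := norm_eq_of_mem_sphere (d i)
  choose φ hφ hgraph using fun k : ℕ => exists_lipschitzWith_graph_of_abs_inner_le
    (S := conePiece A (d (e k).1) ((e k).2.1 + 1) (q (e k).2.2)) (K := 2 * ((e k).2.1 + 1))
    fun x hx y hy => by
      exact_mod_cast abs_inner_sub_le_of_mem_conePiece (hunit _) le_add_self hx hy
  refine ⟨fun k => d (e k).1, fun k => 2 * ((e k).2.1 + 1), φ, ∅, MeasureTheory.measure_empty,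
    fun k => ⟨hunit _, hφ k⟩, fun x hx => Or.inr ?_⟩
  have hx' := subset_iUnion_conePiece hcone hd hq hx
  simp only [Set.mem_iUnion] at hx'
  obtain ⟨i, j, m, hx'⟩ := hx'
  exact Set.mem_iUnion.2 ⟨e.symm (i, j, m), hgraph _ x (by simpa using hx')⟩
end

section
/- Fix j ∈ ℕ. There exists ε_j > 0 such that for any unit vectors ν, ν_i ∈ 𝕊^{n-1} with |ν - ν_i| < ε_j, one has ν ∈ C_{2j}(ν_i^⊥), i.e., 2j·|P_{ν_i^⊥}(ν)| < ⟨ν, ν_i⟩. Moreover there exists α_j > 0 such that whenever |ν - ν_i| < ε_j, the cone inclusion C_{α_j}(ν_i^⊥) ⊆ C_j(ν^⊥) holds. -/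
open scoped RealInnerProductSpace

private lemma le_of_sq_le_sq' {x y : ℝ} (hx : 0 ≤ x) (hy : 0 ≤ y) (h : x^2 ≤ y^2) : x ≤ y := by
  nlinarith

set_option maxHeartbeats 1600000 in
/-- Quantitative cone-comparison lemma from Proposition 3.7: unit axes close
on the sphere yield membership `ν ∈ C_{2j}(ν_i^⊥)` and a common inner cone
`C_{α_j}(ν_i^⊥) ⊆ C_j(ν^⊥)` with controlled opening. -/
theorem stmt_11 {n : ℕ} (j : ℕ) :
    ∃ ε > (0 : ℝ),
      (∀ ν νi : EuclideanSpace ℝ (Fin n), ‖ν‖ = 1 → ‖νi‖ = 1 → ‖ν - νi‖ < ε →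
        (2 * j : ℝ) * ‖ν - ⟪ν, νi⟫ • νi‖ < ⟪ν, νi⟫) ∧
      ∃ αj > (0 : ℝ), ∀ ν νi : EuclideanSpace ℝ (Fin n),
        ‖ν‖ = 1 → ‖νi‖ = 1 → ‖ν - νi‖ < ε →
        ∀ z : EuclideanSpace ℝ (Fin n),
          αj * ‖z - ⟪z, νi⟫ • νi‖ < ⟪z, νi⟫ →
          (j : ℝ) * ‖z - ⟪z, ν⟫ • ν‖ < ⟪z, ν⟫ := by
  set J : ℝ := (j : ℝ) with hJdef
  have hJ : (0:ℝ) ≤ J := Nat.cast_nonneg j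
  set e : ℝ := 1/(8*(J+1)) with hedef
  have he : 0 < e := by positivity
  have he8 : 8*(J+1)*e = 1 := by
    rw [hedef]; field_simp
  have he18 : e ≤ 1/8 := by nlinarith
  refine ⟨e, he, ?_, 4*(J+1), by positivity, ?_⟩
  · intro ν νi hν hνi h
    set t : ℝ := ⟪ν, νi⟫ with ht
    set d : ℝ := ‖ν - νi‖ with hd
    have hd0 : 0 ≤ d := norm_nonneg _
    have hd2 : d^2 = 2 - 2*t := by
      rw [hd, ht, norm_sub_sq_real, hν, hνi]; ring
    have ht1 : t ≤ 1 := by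
      have := real_inner_le_norm ν νi
      rw [hν, hνi] at this; simpa [ht] using this
    have hP2 : ‖ν - t • νi‖^2 = 1 - t^2 := by
      rw [norm_sub_sq_real, real_inner_smul_right, norm_smul, hν, hνi,
        Real.norm_eq_abs, mul_one, sq_abs, ← ht]
      ring
    have hPd : ‖ν - t • νi‖ ≤ d := by
      refine le_of_sq_le_sq' (norm_nonneg _) hd0 ?_
      rw [hP2, hd2]; nlinarith
    have h1 : 2*J*‖ν - t • νi‖ ≤ 2*J*e :=
      mul_le_mul_of_nonneg_left (hPd.trans h.le) (by positivity)
    have h2 : 2*J*e ≤ 1/4 := by nlinarith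
    have hd2' : d^2 < e^2 := by nlinarith
    have ht' : 1 - e^2/2 < t := by nlinarith
    have he2 : e^2 ≤ 1/64 := by nlinarith
    calc (2*J) * ‖ν - t • νi‖ ≤ 1/4 := by linarith
      _ < t := by linarith
  · intro ν νi hν hνi h z hz
    set a : ℝ := ⟪z, νi⟫ with ha'
    set b : ℝ := ⟪z, ν⟫ with hb'
    set p : ℝ := ‖z - a • νi‖ with hp'
    have hp : 0 ≤ p := norm_nonneg _
    set d : ℝ := ‖ν - νi‖ with hd'
    have hd0 : 0 ≤ d := norm_nonneg _
    have ha : 0 < a := lt_of_le_of_lt (by positivity : (0:ℝ) ≤ 4*(J+1)*p) hz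
    have hzn : ‖z‖ ≤ p + a := by
      calc ‖z‖ = ‖(z - a • νi) + a • νi‖ := by rw [sub_add_cancel]
        _ ≤ ‖z - a • νi‖ + ‖a • νi‖ := norm_add_le _ _
        _ = p + a := by rw [norm_smul, hνi, Real.norm_eq_abs, abs_of_pos ha, mul_one, hp']
    have hbineq : a - ‖z‖ * d ≤ b := by
      have hsub : b - a = ⟪z, ν - νi⟫ := by rw [inner_sub_right, ha', hb']
      have habs := abs_real_inner_le_norm z (ν - νi)
      rw [← hsub, ← hd'] at habs
      have := neg_abs_le (b - a)
      linarith
    have hmin : ‖z - b • ν‖ ≤ ‖z - a • ν‖ := by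
      refine le_of_sq_le_sq' (norm_nonneg _) (norm_nonneg _) ?_
      rw [norm_sub_sq_real, norm_sub_sq_real, real_inner_smul_right, real_inner_smul_right,
        norm_smul, norm_smul, hν, Real.norm_eq_abs, Real.norm_eq_abs, ← hb']
      simp only [mul_one, sq_abs]
      nlinarith [sq_nonneg (a - b)]
    have htri : ‖z - a • ν‖ ≤ p + a * d := by
      have heq : z - a • ν = (z - a • νi) + a • (νi - ν) := by
        rw [smul_sub]; abel
      calc ‖z - a • ν‖ = ‖(z - a • νi) + a • (νi - ν)‖ := by rw [heq]
        _ ≤ ‖z - a • νi‖ + ‖a • (νi - ν)‖ := norm_add_le _ _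
        _ = p + a * ‖νi - ν‖ := by rw [norm_smul, Real.norm_eq_abs, abs_of_pos ha, hp']
        _ = p + a * d := by rw [norm_sub_rev, hd']
    have hb2 : a - (p + a)*d ≤ b := by
      have := mul_le_mul_of_nonneg_right hzn hd0
      linarith
    set q : ℝ := ‖z - b • ν‖ with hq'
    have hq0 : 0 ≤ q := norm_nonneg _
    have hqle : q ≤ p + a * d := hmin.trans htri
    clear_value J e a b p d q
    clear hmin htri hzn hbineq hq' hp' hd' ha' hb' hν hνi hJdef hedef z ν νi
    -- numeric bounds
    have hde : d < e := h
    have hd8 : d < 1/8 := lt_of_lt_of_le hde he18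
    have hJp : J*p < a/4 := by linarith [mul_nonneg hJ hp]
    have hJe : J*e ≤ 1/8 := by have := mul_nonneg hJ he.le; linarith
    have hJd : J*d ≤ J*e := mul_le_mul_of_nonneg_left hde.le hJ
    have hJad : J*(a*d) ≤ a/8 := by
      have := mul_le_mul_of_nonneg_left (hJd.trans hJe) ha.le
      nlinarith [this]
    have hpa : p < a/4 := by linarith [mul_nonneg hJ hp]
    have hpd : p*d ≤ a/32 := by
      have h1 := mul_le_mul_of_nonneg_left hd8.le hp
      linarith
    have had : a*d < a/8 := by
      have := mul_lt_mul_of_pos_left hd8 ha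
      linarith
    have hq : J * q ≤ J*p + J*(a*d) := by
      have := mul_le_mul_of_nonneg_left hqle hJ
      nlinarith [this]
    calc J * q ≤ J*p + J*(a*d) := hq
      _ < b := by nlinarith [hb2, hpd, had, hJp, hJad]
end

section
/- Let φ : ℝⁿ → ℝ be differentiable at x₀ with ∇φ(x₀) ≠ 0, and suppose for each unit vector u with ⟨u, ν⟩ > cos θ (where ν = -∇φ(x₀)/|∇φ(x₀)| and θ ∈ (0, π/2) fixed) we have the first-order estimate φ(x₀ + tu) ≤ φ(x₀) - |∇φ(x₀)| t cos θ + o(t). Then there exists δ > 0 such that the cone (x₀ + C_{tan(π/2 - θ)}(ν^⊥)) ∩ B_δ(x₀) is contained in the strict sublevel set {x : φ(x) < φ(x₀)}. Moreover, if φ is C¹ with modulus of continuity of ∇φ controlled uniformly and |∇φ| ≥ b₁ > 0 uniformly, then as δ → 0 one may take θ → π/2, i.e., for every α > 0 there exists δ(α) > 0 such that the cone of opening parameter α works at every such point x₀. -/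
open scoped RealInnerProductSpace
open Metric Set Filter Topology Real

/-!
A point `z = x + t • u` of the cone `α ‖w - ⟪w, ν⟫ • ν‖ < ⟪w, ν⟫` (with `w = z - x`, `‖u‖ = 1`) has
direction `u` making an angle with `ν` whose cosine exceeds `α / √(1 + α²)`; for
`α = tan (π/2 - θ)` this bound is `cos θ`. So it suffices to show that `f` strictly decreases
along every such ray for `0 < t < δ`. At a single point this is the first-order estimate, once
`ε t / t` is smaller than `‖∇f x₀‖ cos θ`. Uniformly in the point, the mean value theorem writes
`f (x + t • u) - f x = t ⟪∇f (x + s • u), u⟫`; the inner product `⟪∇f x, u⟫` is at most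
`-b₁ α / √(1 + α²)`, and uniform continuity of `∇f` keeps `⟪∇f (x + s • u), u⟫` negative for
`s < δ`, with `δ` depending only on `α`, `b₁` and the modulus of continuity.
-/

section Cone

variable {E : Type*} [NormedAddCommGroup E] [InnerProductSpace ℝ E]

lemma norm_neg_inv_norm_smul {g : E} (hg : g ≠ 0) : ‖-(‖g‖⁻¹) • g‖ = 1 := by
  rw [neg_smul, norm_neg]
  exact norm_smul_inv_norm hg

lemma mul_div_sqrt_one_add_sq_lt_inner {ν w : E} (hν : ‖ν‖ = 1) {α : ℝ} (hα : 0 < α)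
    (hcone : α * ‖w - ⟪w, ν⟫ • ν‖ < ⟪w, ν⟫) :
    ‖w‖ * (α / √(1 + α ^ 2)) < ⟪w, ν⟫ := by
  set s := ⟪w, ν⟫
  set p := ‖w - s • ν‖
  have hs : 0 < s := lt_of_le_of_lt (by positivity) hcone
  have hpyth : p ^ 2 = ‖w‖ ^ 2 - s ^ 2 := by
    rw [norm_sub_sq_real, real_inner_smul_right, norm_smul, hν, Real.norm_eq_abs]
    ring_nf
    rw [sq_abs]
    ring
  have hsqrt : 0 < √(1 + α ^ 2) := sqrt_pos.2 (by positivity)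
  rw [mul_div_assoc', div_lt_iff₀ hsqrt]
  -- `(‖w‖ α)² = (p² + s²) α² < s² (1 + α²)` because `α p < s`
  refine (pow_lt_pow_iff_left₀ (by positivity) (by positivity) two_ne_zero).1 ?_
  rw [mul_pow, mul_pow, sq_sqrt (by positivity)]
  nlinarith [mul_nonneg hα.le (norm_nonneg (w - s • ν))]

lemma inner_lt_neg_mul_of_lt_inner {g u : E} (hg : g ≠ 0) {κ : ℝ}
    (h : κ < ⟪u, -(‖g‖⁻¹) • g⟫) : ⟪g, u⟫ < -(‖g‖ * κ) := by
  have hnorm : 0 < ‖g‖ := norm_pos_iff.2 hg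
  rw [real_inner_smul_right, real_inner_comm, neg_mul, lt_neg, ← lt_div_iff₀' (inv_pos.2 hnorm),
    div_inv_eq_mul] at h
  linarith

lemma lt_of_mem_cone {f : E → ℝ} {x ν z : E} (hν : ‖ν‖ = 1) {α δ : ℝ} (hα : 0 < α)
    (hdec : ∀ u t, ‖u‖ = 1 → α / √(1 + α ^ 2) < ⟪u, ν⟫ → 0 < t → t < δ → f (x + t • u) < f x)
    (hz : z ∈ ball x δ) (hcone : α * ‖(z - x) - ⟪z - x, ν⟫ • ν‖ < ⟪z - x, ν⟫) :
    f z < f x := by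
  set w := z - x with hw
  have hlt := mul_div_sqrt_one_add_sq_lt_inner hν hα hcone
  have hw0 : w ≠ 0 := by
    rintro hw0
    simp [hw0] at hlt
  have hnorm : 0 < ‖w‖ := norm_pos_iff.2 hw0
  have hdir : α / √(1 + α ^ 2) < ⟪‖w‖⁻¹ • w, ν⟫ := by
    rwa [real_inner_smul_left, lt_inv_mul_iff₀ hnorm]
  have hu : ‖‖w‖⁻¹ • w‖ = 1 := by
    rw [norm_smul, norm_inv, norm_norm, inv_mul_cancel₀ hnorm.ne']
  have hzx : x + ‖w‖ • ‖w‖⁻¹ • w = z := by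
    rw [smul_inv_smul₀ hnorm.ne', hw, add_sub_cancel]
  have hδ : ‖w‖ < δ := by rwa [hw, ← dist_eq_norm, ← mem_ball]
  simpa only [hzx] using hdec _ _ hu hdir hnorm hδ

theorem exists_ball_cone_subset_sublevel_of_first_order {f : E → ℝ} {x ν : E} (hν : ‖ν‖ = 1)
    {α c : ℝ} (hα : 0 < α) (hc : 0 < c) {ε : ℝ → ℝ}
    (hε : Tendsto (fun t => ε t / t) (𝓝[>] 0) (𝓝 0))
    (hest : ∀ u t, ‖u‖ = 1 → α / √(1 + α ^ 2) < ⟪u, ν⟫ → 0 < t →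
      f (x + t • u) ≤ f x - c * t + ε t) :
    ∃ δ > 0, ∀ z ∈ ball x δ, α * ‖(z - x) - ⟪z - x, ν⟫ • ν‖ < ⟪z - x, ν⟫ → f z < f x := by
  obtain ⟨δ, hδ, hsmall⟩ := (nhdsGT_basis (0 : ℝ)).eventually_iff.1 (hε.eventually_lt_const hc)
  refine ⟨δ, hδ, fun z hz => lt_of_mem_cone hν hα ?_ hz⟩
  intro u t hu hdir ht htδ
  have hεt : ε t < c * t := (div_lt_iff₀ ht).1 (hsmall ⟨ht, htδ⟩)
  linarith [hest u t hu hdir ht]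

end Cone

section Gradient

variable {E : Type*} [NormedAddCommGroup E] [InnerProductSpace ℝ E] [CompleteSpace E]
  {f : E → ℝ}

lemma exists_sub_eq_mul_inner_gradient (hf : Differentiable ℝ f) (x u : E) {t : ℝ}
    (ht : 0 < t) : ∃ s ∈ Ioo 0 t, f (x + t • u) - f x = t * ⟪gradient f (x + s • u), u⟫ := by
  have hderiv : ∀ s : ℝ,
      HasDerivAt (fun s : ℝ => f (x + s • u)) ⟪gradient f (x + s • u), u⟫ s := by
    intro s
    have hline : HasDerivAt (fun s : ℝ => x + s • u) u s := by
      simpa using ((hasDerivAt_id s).smul_const u).const_add x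
    rw [inner_gradient_left]
    exact (hf _).hasFDerivAt.comp_hasDerivAt s hline
  obtain ⟨s, hs, hslope⟩ := exists_hasDerivAt_eq_slope _ _ ht
    (fun s _ => (hderiv s).continuousAt.continuousWithinAt) (fun s _ => hderiv s)
  refine ⟨s, hs, ?_⟩
  rw [hslope, zero_smul, add_zero, sub_zero]
  field_simp

theorem exists_uniform_ball_cone_subset_sublevel (hf : Differentiable ℝ f)
    (hUC : UniformContinuous (gradient f)) {b : ℝ} (hb : 0 < b)
    (hlb : ∀ x, b ≤ ‖gradient f x‖) {α : ℝ} (hα : 0 < α) :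
    ∃ δ > 0, ∀ x z, z ∈ ball x δ →
      α * ‖(z - x) - ⟪z - x, -(‖gradient f x‖⁻¹) • gradient f x⟫ •
          (-(‖gradient f x‖⁻¹) • gradient f x)‖ <
        ⟪z - x, -(‖gradient f x‖⁻¹) • gradient f x⟫ → f z < f x := by
  set κ := α / √(1 + α ^ 2)
  have hκ : 0 < κ := by positivity
  obtain ⟨δ, hδ, hnear⟩ := Metric.uniformContinuous_iff.1 hUC (b * κ) (by positivity)
  refine ⟨δ, hδ, fun x z hz hcone => ?_⟩
  have hgx : gradient f x ≠ 0 := norm_pos_iff.1 (hb.trans_le (hlb x))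
  refine lt_of_mem_cone (norm_neg_inv_norm_smul hgx) hα ?_ hz hcone
  intro u t hu hdir ht htδ
  obtain ⟨s, hs, hmvt⟩ := exists_sub_eq_mul_inner_gradient hf x u ht
  have hgx_u : ⟪gradient f x, u⟫ < -(b * κ) :=
    (inner_lt_neg_mul_of_lt_inner hgx hdir).trans_le
      (neg_le_neg (mul_le_mul_of_nonneg_right (hlb x) hκ.le))
  have hdist : dist (x + s • u) x < δ := by
    rw [dist_eq_norm, add_sub_cancel_left, norm_smul, hu, mul_one, Real.norm_of_nonneg hs.1.le]
    exact hs.2.trans htδ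
  have hgs_u : ⟪gradient f (x + s • u), u⟫ < 0 := calc
    ⟪gradient f (x + s • u), u⟫
        = ⟪gradient f x, u⟫ + ⟪gradient f (x + s • u) - gradient f x, u⟫ := by
          rw [inner_sub_left]; ring
    _ ≤ ⟪gradient f x, u⟫ + dist (gradient f (x + s • u)) (gradient f x) := by
          rw [dist_eq_norm]
          gcongr
          simpa [hu] using real_inner_le_norm (gradient f (x + s • u) - gradient f x) u
    _ < 0 := by linarith [hnear hdist]
  nlinarith [mul_neg_of_pos_of_neg ht hgs_u]

end Gradient

theorem stmt_15_general {n : ℕ} (φ : EuclideanSpace ℝ (Fin n) → ℝ)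
    (x₀ : EuclideanSpace ℝ (Fin n))
    (hg : gradient φ x₀ ≠ 0)
    (θ : ℝ) (hθ : θ ∈ Set.Ioo 0 (Real.pi / 2))
    (ν : EuclideanSpace ℝ (Fin n))
    (hν : ν = -(‖gradient φ x₀‖⁻¹) • gradient φ x₀)
    (ε : ℝ → ℝ)
    (hε : Filter.Tendsto (fun t => ε t / t) (nhdsWithin 0 (Set.Ioi 0)) (nhds 0))
    (hest : ∀ (u : EuclideanSpace ℝ (Fin n)) (t : ℝ), ‖u‖ = 1 →
      Real.cos θ < ⟪u, ν⟫ → 0 < t →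
      φ (x₀ + t • u) ≤ φ x₀ - ‖gradient φ x₀‖ * t * Real.cos θ + ε t) :
    (∃ δ > 0, ∀ z ∈ Metric.ball x₀ δ,
      Real.tan (Real.pi / 2 - θ) * ‖(z - x₀) - ⟪z - x₀, ν⟫ • ν‖ < ⟪z - x₀, ν⟫ →
      φ z < φ x₀) ∧
    ((ContDiff ℝ 1 φ ∧ UniformContinuous (gradient φ) ∧
        ∃ b₁ > (0 : ℝ), ∀ x, b₁ ≤ ‖gradient φ x‖) →
      ∀ α > (0 : ℝ), ∃ δ > (0 : ℝ), ∀ x₁ z : EuclideanSpace ℝ (Fin n),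
        z ∈ Metric.ball x₁ δ →
        α * ‖(z - x₁) - ⟪z - x₁, -(‖gradient φ x₁‖⁻¹) • gradient φ x₁⟫ •
            (-(‖gradient φ x₁‖⁻¹) • gradient φ x₁)‖ <
          ⟪z - x₁, -(‖gradient φ x₁‖⁻¹) • gradient φ x₁⟫ →
        φ z < φ x₁) := by
  obtain ⟨hθ0, hθ2⟩ := hθ
  have hcos : 0 < cos θ := cos_pos_of_mem_Ioo ⟨by linarith [pi_pos], hθ2⟩
  have hcos' : 0 < cos (π / 2 - θ) := by
    rw [cos_pi_div_two_sub]
    exact sin_pos_of_pos_of_lt_pi hθ0 (by linarith [pi_pos])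
  have hangle : tan (π / 2 - θ) / √(1 + tan (π / 2 - θ) ^ 2) = cos θ := by
    rw [tan_div_sqrt_one_add_tan_sq hcos', sin_pi_div_two_sub]
  refine ⟨?_, fun ⟨hC1, hUC, b₁, hb₁, hlb⟩ α hα =>
    exists_uniform_ball_cone_subset_sublevel (hC1.differentiable one_ne_zero) hUC hb₁ hlb hα⟩
  refine exists_ball_cone_subset_sublevel_of_first_order (hν ▸ norm_neg_inv_norm_smul hg)
    (tan_pos_of_pos_of_lt_pi_div_two (by linarith) (by linarith))
    (mul_pos (norm_pos_iff.2 hg) hcos) hε fun u t hu hdir ht => ?_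
  rw [hangle] at hdir
  linarith [hest u t hu hdir ht]

/-- Lemma 2.6 with Remark 2.7: a first-order decrease estimate in a cone of
directions around ν = -∇φ(x₀)/|∇φ(x₀)| produces an interior cone (of opening
parameter tan(π/2 - θ)) contained in the strict sublevel set; moreover, for a
C¹ function with uniformly continuous gradient bounded below in norm, for
every α > 0 there is a uniform height δ(α) > 0 making the cone of parameter α
work at every point. -/
theorem stmt_15 {n : ℕ} (φ : EuclideanSpace ℝ (Fin n) → ℝ)
    (x₀ : EuclideanSpace ℝ (Fin n)) (hdiff : DifferentiableAt ℝ φ x₀)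
    (hg : gradient φ x₀ ≠ 0)
    (θ : ℝ) (hθ : θ ∈ Set.Ioo 0 (Real.pi / 2))
    (ν : EuclideanSpace ℝ (Fin n))
    (hν : ν = -(‖gradient φ x₀‖⁻¹) • gradient φ x₀)
    (ε : ℝ → ℝ)
    (hε : Filter.Tendsto (fun t => ε t / t) (nhdsWithin 0 (Set.Ioi 0)) (nhds 0))
    (hest : ∀ (u : EuclideanSpace ℝ (Fin n)) (t : ℝ), ‖u‖ = 1 →
      Real.cos θ < ⟪u, ν⟫ → 0 < t →
      φ (x₀ + t • u) ≤ φ x₀ - ‖gradient φ x₀‖ * t * Real.cos θ + ε t) :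
    (∃ δ > 0, ∀ z ∈ Metric.ball x₀ δ,
      Real.tan (Real.pi / 2 - θ) * ‖(z - x₀) - ⟪z - x₀, ν⟫ • ν‖ < ⟪z - x₀, ν⟫ →
      φ z < φ x₀) ∧
    ((ContDiff ℝ 1 φ ∧ UniformContinuous (gradient φ) ∧
        ∃ b₁ > (0 : ℝ), ∀ x, b₁ ≤ ‖gradient φ x‖) →
      ∀ α > (0 : ℝ), ∃ δ > (0 : ℝ), ∀ x₁ z : EuclideanSpace ℝ (Fin n),
        z ∈ Metric.ball x₁ δ →
        α * ‖(z - x₁) - ⟪z - x₁, -(‖gradient φ x₁‖⁻¹) • gradient φ x₁⟫ •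
            (-(‖gradient φ x₁‖⁻¹) • gradient φ x₁)‖ <
          ⟪z - x₁, -(‖gradient φ x₁‖⁻¹) • gradient φ x₁⟫ →
        φ z < φ x₁) :=
  stmt_15_general φ x₀ hg θ hθ ν hν ε hε hest
end

section
/- Let D = ⋃_{i ∈ I} E_i be a union of open sets E_i ⊂ ℝⁿ, where each E_i satisfies a uniform interior cone condition with common profile (δ, α): for all i and all x ∈ ∂E_i there exists ν ∈ 𝕊^{n-1} with (y + C_α(ν^⊥)) ∩ B_δ(x) ⊆ E_i for all y ∈ Ē_i ∩ B_δ(x). Then at every point x ∈ ∂D, there exist i ∈ I and ν ∈ 𝕊^{n-1} such that (x + C_α(ν^⊥)) ∩ B_δ(x) ⊆ D. -/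
open scoped RealInnerProductSpace

open Metric Set

/-! A boundary point of `⋃ i, Es i` is a limit of boundary points of the individual `Es i`:
a small connected neighbourhood of it meets some `Es i` and the complement of the union, hence
`∂(Es i)`. At each such point `z` the hypothesis, applied with `y = z`, gives a unit direction
whose truncated cone at `z` lies in the union. The pairs (vertex, direction) whose truncated cone
lies in a fixed set form a closed set, and the unit sphere is compact, so the limit point inherits
such a direction. -/

theorem IsPreconnected.inter_frontier_nonempty {X : Type*} [TopologicalSpace X] {s t : Set X}
    (hs : IsPreconnected s) (hst : (s ∩ t).Nonempty) (hst' : (s \ t).Nonempty) :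
    (s ∩ frontier t).Nonempty := by
  rw [frontier_eq_closure_inter_closure]
  exact isPreconnected_closed_iff.1 hs _ _ isClosed_closure isClosed_closure
    (fun z _ => (em (z ∈ t)).imp (subset_closure ·) (subset_closure ·))
    (hst.mono (inter_subset_inter_right _ subset_closure))
    (hst'.mono (inter_subset_inter_right _ subset_closure))

theorem frontier_iUnion_subset_closure_iUnion_frontier {X ι : Type*} [TopologicalSpace X]
    [LocallyConnectedSpace X] (s : ι → Set X) :
    frontier (⋃ i, s i) ⊆ closure (⋃ i, frontier (s i)) := by
  intro x ⟨hx_cl, hx_int⟩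
  rw [mem_closure_iff_nhds_basis (LocallyConnectedSpace.open_connected_basis x)]
  rintro U ⟨hU_open, hxU, hU_conn⟩
  obtain ⟨y, hyU, hy⟩ := mem_closure_iff.1 hx_cl U hU_open hxU
  obtain ⟨i, hyi⟩ := mem_iUnion.1 hy
  have hU_not_sub : ¬U ⊆ ⋃ i, s i := fun h => hx_int (interior_maximal h hU_open hxU)
  obtain ⟨z, hzU, hz⟩ := not_subset.1 hU_not_sub
  obtain ⟨w, hwU, hw⟩ := hU_conn.isPreconnected.inter_frontier_nonempty ⟨y, hyU, hyi⟩
    ⟨z, hzU, fun hzi => hz (mem_iUnion_of_mem i hzi)⟩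
  exact ⟨w, mem_iUnion_of_mem i hw, hwU⟩

theorem IsClosed.setOf_exists_mem_of_isCompact {X Y : Type*} [TopologicalSpace X]
    [TopologicalSpace Y] {s : Set (X × Y)} (hs : IsClosed s) {K : Set Y} (hK : IsCompact K) :
    IsClosed {x | ∃ y ∈ K, (x, y) ∈ s} := by
  have := isCompact_iff_compactSpace.1 hK
  have hs' : IsClosed {p : X × K | (p.1, (p.2 : Y)) ∈ s} :=
    hs.preimage (continuous_fst.prodMk (continuous_subtype_val.comp continuous_snd))
  convert isClosedMap_fst_of_compactSpace _ hs' using 1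
  ext x
  simp

section Cone

variable {E : Type*} [NormedAddCommGroup E] [InnerProductSpace ℝ E]

/-- The truncated cone `(x + C_α(ν^⊥)) ∩ B_δ(x)`: for a unit vector `ν`,
`v - ⟪v, ν⟫ • ν` is the projection of `v` onto `ν^⊥`. -/
def truncCone (α δ : ℝ) (x ν : E) : Set E :=
  {w | α * ‖(w - x) - ⟪w - x, ν⟫ • ν‖ < ⟪w - x, ν⟫ ∧ w ∈ ball x δ}

theorem isOpen_setOf_mem_truncCone (α δ : ℝ) (w : E) :
    IsOpen {p : E × E | w ∈ truncCone α δ p.1 p.2} := by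
  have hv : Continuous fun p : E × E => w - p.1 := continuous_const.sub continuous_fst
  have hc : Continuous fun p : E × E => ⟪w - p.1, p.2⟫ := hv.inner continuous_snd
  exact (isOpen_lt (continuous_const.mul (hv.sub (hc.smul continuous_snd)).norm) hc).inter
    (isOpen_lt (continuous_const.dist continuous_fst) continuous_const)

theorem isClosed_setOf_truncCone_subset (α δ : ℝ) (D : Set E) :
    IsClosed {p : E × E | truncCone α δ p.1 p.2 ⊆ D} := by
  simp only [subset_def, ofPred_forall]
  refine isClosed_iInter fun w => ?_
  by_cases hw : w ∈ D
  · simp [hw]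
  · simp only [hw, imp_false]
    exact (isOpen_setOf_mem_truncCone α δ w).isClosed_compl

theorem isClosed_setOf_exists_unit_truncCone_subset [ProperSpace E] (α δ : ℝ) (D : Set E) :
    IsClosed {x : E | ∃ ν ∈ sphere (0 : E) 1, truncCone α δ x ν ⊆ D} :=
  (isClosed_setOf_truncCone_subset α δ D).setOf_exists_mem_of_isCompact (isCompact_sphere 0 1)

end Cone

theorem stmt_16_general {n : ℕ} {I : Type*} (Es : I → Set (EuclideanSpace ℝ (Fin n)))
    (δ α : ℝ) (hδ : 0 < δ)
    (hprofile : ∀ i, ∀ x ∈ frontier (Es i),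
      ∃ ν : EuclideanSpace ℝ (Fin n), ‖ν‖ = 1 ∧
        ∀ y ∈ closure (Es i) ∩ Metric.ball x δ, ∀ w,
          α * ‖(w - y) - ⟪w - y, ν⟫ • ν‖ < ⟪w - y, ν⟫ →
          w ∈ Metric.ball x δ → w ∈ Es i) :
    ∀ x ∈ frontier (⋃ i, Es i),
      ∃ (_ : I) (ν : EuclideanSpace ℝ (Fin n)), ‖ν‖ = 1 ∧
        ∀ w, α * ‖(w - x) - ⟪w - x, ν⟫ • ν‖ < ⟪w - x, ν⟫ →
          w ∈ Metric.ball x δ → w ∈ ⋃ i, Es i := by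
  intro x hx
  obtain ⟨i₀, -⟩ := mem_iUnion.1 (closure_nonempty_iff.1 ⟨x, hx.1⟩).some_mem
  have hcone : ⋃ i, frontier (Es i) ⊆
      {z | ∃ ν ∈ sphere (0 : EuclideanSpace ℝ (Fin n)) 1, truncCone α δ z ν ⊆ ⋃ i, Es i} := by
    simp only [iUnion_subset_iff]
    intro i z hz
    obtain ⟨ν, hν, hνcone⟩ := hprofile i z hz
    exact ⟨ν, mem_sphere_zero_iff_norm.2 hν, fun w ⟨hw, hwb⟩ =>
      mem_iUnion_of_mem i (hνcone z ⟨hz.1, mem_ball_self hδ⟩ w hw hwb)⟩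
  obtain ⟨ν, hν, hνcone⟩ :=
    (isClosed_setOf_exists_unit_truncCone_subset α δ _).closure_subset_iff.2 hcone
      (frontier_iUnion_subset_closure_iUnion_frontier Es hx)
  exact ⟨i₀, ν, mem_sphere_zero_iff_norm.1 hν, fun w hw hwb => hνcone ⟨hw, hwb⟩⟩

/-- Passage of the uniform interior cone condition from individual open sets
to their union (step in the proof of Theorem 1.1): if every `E_i` satisfies a
uniform interior cone condition with the common profile (δ, α), then at every
boundary point of `D = ⋃ E_i` some cone of the same profile fits inside D. -/
theorem stmt_16 {n : ℕ} {I : Type*} (Es : I → Set (EuclideanSpace ℝ (Fin n)))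
    (hopen : ∀ i, IsOpen (Es i)) (δ α : ℝ) (hδ : 0 < δ) (hα : 0 < α)
    (hprofile : ∀ i, ∀ x ∈ frontier (Es i),
      ∃ ν : EuclideanSpace ℝ (Fin n), ‖ν‖ = 1 ∧
        ∀ y ∈ closure (Es i) ∩ Metric.ball x δ, ∀ w,
          α * ‖(w - y) - ⟪w - y, ν⟫ • ν‖ < ⟪w - y, ν⟫ →
          w ∈ Metric.ball x δ → w ∈ Es i) :
    ∀ x ∈ frontier (⋃ i, Es i),
      ∃ (_ : I) (ν : EuclideanSpace ℝ (Fin n)), ‖ν‖ = 1 ∧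
        ∀ w, α * ‖(w - x) - ⟪w - x, ν⟫ • ν‖ < ⟪w - x, ν⟫ →
          w ∈ Metric.ball x δ → w ∈ ⋃ i, Es i :=
  stmt_16_general Es δ α hδ hprofile
end
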